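/- For t < 0 and x ∈ ℝ define S(t, x) = |t|^{−1/2} · Q(x/|t|) · exp(−i·x²/(4|t|)) · exp(i/|t|). Then S is smooth on (−∞, 0) × ℝ and satisfies the quintic nonlinear Schrödinger equation i·∂ₜS + ∂ₓ²S + |S|⁴·S = 0 there; for every t < 0 one has ∫_ℝ |S(t, x)|² dx = √3·π/2; and there exist constants c, C > 0 such that c/|t| ≤ (∫_ℝ |∂ₓS(t, x)|² dx)^{1/2} ≤ C/|t| for all t ∈ [−1, 0). -/

import Mathlib

open Real MeasureTheory

/-- The ground state `Q x = 3^(1/4) (sech (2x))^(1/2)`. -/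
noncomputable def Q (x : ℝ) : ℝ :=
  (3 : ℝ) ^ ((1 : ℝ) / 4) * (1 / Real.cosh (2 * x)) ^ ((1 : ℝ) / 2)

/-- The explicit pseudo-conformal minimal-mass blow-up solution
`S(t,x) = |t|^{−1/2} Q(x/|t|) e^{−ix²/(4|t|)} e^{i/|t|}` (for `t < 0`). -/
noncomputable def Spc (t x : ℝ) : ℂ :=
  ((|t| ^ (-(1 : ℝ) / 2) * Q (x / |t|) : ℝ) : ℂ) *
    Complex.exp (-Complex.I * (x : ℂ) ^ 2 / (4 * ((|t| : ℝ) : ℂ))) *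
    Complex.exp (Complex.I / ((|t| : ℝ) : ℂ))

open Set Filter

noncomputable def Qd (x : ℝ) : ℝ :=
  -((3 : ℝ) ^ ((1 : ℝ) / 4)) * Real.sinh (2 * x) * Real.cosh (2 * x) ^ (-(3 : ℝ) / 2)

noncomputable def Qdd (x : ℝ) : ℝ :=
  (3 : ℝ) ^ ((1 : ℝ) / 4) * (Real.cosh (2 * x) ^ 2 - 3) * Real.cosh (2 * x) ^ (-(5 : ℝ) / 2)

lemma Q_eq (x : ℝ) : Q x = (3 : ℝ) ^ ((1 : ℝ) / 4) * Real.cosh (2 * x) ^ (-(1 : ℝ) / 2) := by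
  simp only [Q, one_div]
  rw [Real.inv_rpow (Real.cosh_pos _).le, ← Real.rpow_neg (Real.cosh_pos _).le]
  norm_num

lemma Q_pos (x : ℝ) : 0 < Q x := by
  rw [Q_eq]; positivity

lemma hasDerivAt_cosh2 (x : ℝ) : HasDerivAt (fun y : ℝ => Real.cosh (2 * y)) (2 * Real.sinh (2 * x)) x := by
  simpa [mul_comm] using ((hasDerivAt_id x).const_mul 2).cosh

lemma hasDerivAt_sinh2 (x : ℝ) : HasDerivAt (fun y : ℝ => Real.sinh (2 * y)) (2 * Real.cosh (2 * x)) x := by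
  simpa [mul_comm] using ((hasDerivAt_id x).const_mul 2).sinh

lemma hasDerivAt_Q (x : ℝ) : HasDerivAt Q (Qd x) x := by
  have hc : Real.cosh (2 * x) ≠ 0 := (Real.cosh_pos _).ne'
  have h := ((hasDerivAt_cosh2 x).rpow_const (p := -(1 : ℝ) / 2) (Or.inl hc)).const_mul ((3 : ℝ) ^ ((1 : ℝ) / 4))
  have heq : (fun y : ℝ => (3 : ℝ) ^ ((1 : ℝ) / 4) * Real.cosh (2 * y) ^ (-(1 : ℝ) / 2)) = Q := by
    funext y; rw [Q_eq]
  rw [heq] at h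
  refine h.congr_deriv (Eq.symm ?_)
  rw [Qd]
  rw [show (-(1 : ℝ) / 2 - 1) = -(3 : ℝ) / 2 by norm_num]
  ring

lemma hasDerivAt_Qd (x : ℝ) : HasDerivAt Qd (Qdd x) x := by
  have hc : Real.cosh (2 * x) ≠ 0 := (Real.cosh_pos _).ne'
  have hr : HasDerivAt (fun y : ℝ => Real.cosh (2 * y) ^ (-(3 : ℝ) / 2))
      (2 * Real.sinh (2 * x) * (-(3 : ℝ) / 2) * Real.cosh (2 * x) ^ (-(3 : ℝ) / 2 - 1)) x :=
    (hasDerivAt_cosh2 x).rpow_const (Or.inl hc)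
  have h := (((hasDerivAt_sinh2 x).mul hr).const_mul (-((3 : ℝ) ^ ((1 : ℝ) / 4))))
  have heq : (fun y : ℝ => -((3 : ℝ) ^ ((1 : ℝ) / 4)) * (Real.sinh (2 * y) * Real.cosh (2 * y) ^ (-(3 : ℝ) / 2))) = Qd := by
    funext y; rw [Qd]; ring
  simp only [Pi.mul_def] at h; rw [heq] at h
  refine h.congr_deriv (Eq.symm ?_)
  rw [Qdd]
  rw [show (-(3 : ℝ) / 2 - 1) = -(5 : ℝ) / 2 by norm_num]
  have h2 : Real.cosh (2 * x) ^ (-(3 : ℝ) / 2) = Real.cosh (2 * x) * Real.cosh (2 * x) ^ (-(5 : ℝ) / 2) := by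
    rw [← Real.rpow_one_add' (Real.cosh_pos _).le (by norm_num)]
    norm_num
  have h3 : Real.sinh (2 * x) ^ 2 = Real.cosh (2 * x) ^ 2 - 1 := by
    have := Real.cosh_sq_sub_sinh_sq (2 * x); linarith
  rw [h2]
  linear_combination (-3 * (3:ℝ) ^ ((1:ℝ)/4) * Real.cosh (2*x) ^ (-(5:ℝ)/2)) * h3

lemma Q_ODE (x : ℝ) : Qdd x - Q x + (Q x) ^ 5 = 0 := by
  have hc : (0:ℝ) < Real.cosh (2 * x) := Real.cosh_pos _
  have h54 : ((3:ℝ) ^ ((1:ℝ)/4)) ^ (5:ℕ) = 3 * (3:ℝ) ^ ((1:ℝ)/4) := by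
    rw [← Real.rpow_natCast ((3:ℝ) ^ ((1:ℝ)/4)) 5, ← Real.rpow_mul (by norm_num : (0:ℝ) ≤ 3)]
    rw [show ((1:ℝ)/4 * (5:ℕ) : ℝ) = 1 + 1/4 by push_cast; norm_num]
    rw [Real.rpow_add (by norm_num : (0:ℝ) < 3), Real.rpow_one]
  have hQ5 : (Q x) ^ 5 = 3 * ((3 : ℝ) ^ ((1 : ℝ) / 4)) * Real.cosh (2 * x) ^ (-(5 : ℝ) / 2) := by
    rw [Q_eq, mul_pow, h54, ← Real.rpow_natCast (Real.cosh (2*x) ^ (-(1:ℝ)/2)) 5, ← Real.rpow_mul hc.le]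
    norm_num
  have hQ : Q x = (3 : ℝ) ^ ((1 : ℝ) / 4) * (Real.cosh (2 * x) ^ 2 * Real.cosh (2 * x) ^ (-(5 : ℝ) / 2)) := by
    rw [Q_eq, ← Real.rpow_natCast (Real.cosh (2*x)) 2, ← Real.rpow_add hc]
    norm_num
  rw [Qdd, hQ5, hQ]; ring

lemma even_integrable {f : ℝ → ℝ} (heven : ∀ x, f (-x) = f x)
    (h : IntegrableOn f (Ioi 0)) : Integrable f := by
  have hIci : IntegrableOn f (Ici (0:ℝ)) := by
    rwa [integrableOn_Ici_iff_integrableOn_Ioi]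
  have h_map_neg : ((volume : Measure ℝ).restrict (Ici 0)).map Neg.neg = volume.restrict (Iic 0) := by
    conv => rhs; rw [← Measure.map_neg_eq_self (volume : Measure ℝ), measurableEmbedding_neg.restrict_map]
    simp
  have hIic : IntegrableOn f (Iic (0:ℝ)) := by
    rw [IntegrableOn, ← h_map_neg, measurableEmbedding_neg.integrable_map_iff]
    have : (f ∘ Neg.neg) = f := funext fun x => heven x
    rw [this]; exact hIci
  rw [← integrableOn_univ, ← Iic_union_Ici_of_le (le_refl (0:ℝ)), integrableOn_union]
  exact ⟨hIic, hIci⟩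

lemma even_integral {f : ℝ → ℝ} (heven : ∀ x, f (-x) = f x)
    (h : Integrable f) : ∫ x, f x = 2 * ∫ x in Ioi (0:ℝ), f x := by
  have hsplit : (∫ x in Iic (0:ℝ), f x) + (∫ x in Ioi (0:ℝ), f x) = ∫ x, f x := by
    rw [← setIntegral_union (by simp [disjoint_left]) measurableSet_Ioi h.integrableOn h.integrableOn]
    simp [Iic_union_Ioi]
  have hIic : (∫ x in Iic (0:ℝ), f x) = ∫ x in Ioi (0:ℝ), f x := by
    rw [← neg_zero, ← integral_comp_neg_Ioi]
    simp only [heven]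
    rw [neg_zero]
  linarith

lemma hasDerivAt_arctan_sinh (x : ℝ) :
    HasDerivAt (fun y : ℝ => Real.arctan (Real.sinh y)) ((Real.cosh x)⁻¹) x := by
  have h := (Real.hasDerivAt_arctan (Real.sinh x)).comp x (Real.hasDerivAt_sinh x)
  have hc : (1 + Real.sinh x ^ 2) = Real.cosh x ^ 2 := by
    have := Real.cosh_sq x; linarith
  refine h.congr_deriv (Eq.symm ?_)
  rw [hc]
  have : Real.cosh x ^ 2 ≠ 0 := by positivity
  field_simp [pow_two]
lemma tendsto_sinh_atTop' : Tendsto Real.sinh atTop atTop :=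
  tendsto_atTop_mono' atTop (eventually_atTop.2 ⟨1, fun x hx => Real.self_le_sinh_iff.2 (by linarith)⟩) tendsto_id

lemma tendsto_arctan_sinh : Tendsto (fun y : ℝ => Real.arctan (Real.sinh y)) atTop (nhds (π / 2)) :=
  (tendsto_nhds_of_tendsto_nhdsWithin Real.tendsto_arctan_atTop).comp tendsto_sinh_atTop'

lemma sech_nonneg (x : ℝ) : 0 ≤ (Real.cosh x)⁻¹ := by positivity

lemma integrableOn_sech_Ioi : IntegrableOn (fun x : ℝ => (Real.cosh x)⁻¹) (Ioi 0) :=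
  integrableOn_Ioi_deriv_of_nonneg
    (Continuous.continuousWithinAt (by continuity))
    (fun x _ => hasDerivAt_arctan_sinh x)
    (fun x _ => sech_nonneg x) tendsto_arctan_sinh

lemma integrable_sech : Integrable (fun x : ℝ => (Real.cosh x)⁻¹) :=
  even_integrable (fun x => by rw [Real.cosh_neg]) integrableOn_sech_Ioi

lemma integral_sech : ∫ x : ℝ, (Real.cosh x)⁻¹ = π := by
  rw [even_integral (fun x => by rw [Real.cosh_neg]) integrable_sech]
  rw [integral_Ioi_of_hasDerivAt_of_nonneg
    (Continuous.continuousWithinAt (by continuity))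
    (fun x _ => hasDerivAt_arctan_sinh x)
    (fun x _ => sech_nonneg x) tendsto_arctan_sinh]
  simp [Real.sinh_zero, Real.arctan_zero]
  ring

lemma norm_Spc (t x : ℝ) (ht : t ≠ 0) : ‖Spc t x‖ = |t| ^ (-(1 : ℝ) / 2) * Q (x / |t|) := by
  have hs : (0:ℝ) < |t| := abs_pos.mpr ht
  have hsC : ((|t| : ℝ) : ℂ) ≠ 0 := by exact_mod_cast hs.ne'
  have h1 : -Complex.I * (x : ℂ) ^ 2 / (4 * ((|t| : ℝ) : ℂ)) = ((-(x^2/(4*|t|)) : ℝ) : ℂ) * Complex.I := by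
    push_cast; field_simp
  have h2 : Complex.I / ((|t| : ℝ) : ℂ) = (((1/|t|) : ℝ) : ℂ) * Complex.I := by
    push_cast; field_simp
  rw [Spc, h1, h2, norm_mul, norm_mul, Complex.norm_real, Real.norm_eq_abs,
    Complex.norm_exp_ofReal_mul_I, Complex.norm_exp_ofReal_mul_I]
  rw [abs_of_nonneg (mul_nonneg (Real.rpow_nonneg (abs_nonneg t) _) (Q_pos _).le)]
  ring

lemma Q_sq (x : ℝ) : Q x ^ 2 = Real.sqrt 3 * (Real.cosh (2 * x))⁻¹ := by
  have hc : (0:ℝ) < Real.cosh (2*x) := Real.cosh_pos _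
  rw [Q_eq, mul_pow, ← Real.rpow_natCast ((3:ℝ) ^ ((1:ℝ)/4)) 2, ← Real.rpow_mul (by norm_num : (0:ℝ) ≤ 3),
    ← Real.rpow_natCast (Real.cosh (2*x) ^ (-(1:ℝ)/2)) 2, ← Real.rpow_mul hc.le,
    Real.sqrt_eq_rpow]
  norm_num
  rw [Real.rpow_neg_one]

lemma integral_Q_sq : ∫ x : ℝ, Q x ^ 2 = Real.sqrt 3 * π / 2 := by
  simp only [Q_sq]
  rw [MeasureTheory.integral_const_mul]
  have := MeasureTheory.Measure.integral_comp_mul_left (fun y : ℝ => (Real.cosh y)⁻¹) 2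
  rw [this, integral_sech, smul_eq_mul, show |(2:ℝ)⁻¹| = 1/2 by norm_num]
  ring

lemma integrable_Q_sq : Integrable (fun x : ℝ => Q x ^ 2) := by
  simp only [Q_sq]
  have h2 : Integrable (fun x : ℝ => (Real.cosh (2 * x))⁻¹) := by
    exact MeasureTheory.Integrable.comp_mul_left' integrable_sech (by norm_num)
  exact h2.const_mul _

lemma mass (t : ℝ) (ht : t < 0) : (∫ x : ℝ, ‖Spc t x‖ ^ 2) = Real.sqrt 3 * π / 2 := by
  have hs : (0:ℝ) < |t| := abs_pos.mpr ht.ne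
  have h : ∀ x : ℝ, ‖Spc t x‖ ^ 2 = |t|⁻¹ * (Q (x / |t|) ^ 2) := by
    intro x
    rw [norm_Spc t x ht.ne, mul_pow, ← Real.rpow_natCast (|t| ^ (-(1:ℝ)/2)) 2, ← Real.rpow_mul hs.le,
      show (-(1:ℝ)/2 * ((2:ℕ):ℝ) : ℝ) = -1 by push_cast; norm_num, Real.rpow_neg_one]
  simp only [h]
  rw [MeasureTheory.integral_const_mul]
  rw [MeasureTheory.Measure.integral_comp_div (fun y : ℝ => Q y ^ 2) |t|]
  rw [abs_of_pos hs, smul_eq_mul, ← mul_assoc, inv_mul_cancel₀ hs.ne', one_mul, integral_Q_sq]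

noncomputable def phase (t x : ℝ) : ℂ :=
  Complex.exp (-Complex.I * (x : ℂ) ^ 2 / (4 * ((|t| : ℝ) : ℂ))) *
    Complex.exp (Complex.I / ((|t| : ℝ) : ℂ))

lemma Spc_eq (t x : ℝ) :
    Spc t x = ((|t| ^ (-(1 : ℝ) / 2) * Q (x / |t|) : ℝ) : ℂ) * phase t x := (mul_assoc _ _ _)

noncomputable def S1 (t x : ℝ) : ℂ :=
  ((|t| ^ (-(3 : ℝ) / 2) * Qd (x / |t|) : ℝ) : ℂ) * phase t x +
    (-Complex.I * x / (2 * |t|)) * Spc t x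

noncomputable def S2 (t x : ℝ) : ℂ :=
  ((|t| ^ (-(5 : ℝ) / 2) * Qdd (x / |t|) : ℝ) : ℂ) * phase t x +
    (-Complex.I * x / (2 * |t|)) * (((|t| ^ (-(3 : ℝ) / 2) * Qd (x / |t|) : ℝ) : ℂ) * phase t x) +
    (-Complex.I / (2 * |t|)) * Spc t x + (-Complex.I * x / (2 * |t|)) * S1 t x

noncomputable def St (t x : ℝ) : ℂ :=
  -(((-(1 / 2) * |t| ^ (-(3 : ℝ) / 2) * Q (x / |t|) - x * |t| ^ (-(5 : ℝ) / 2) * Qd (x / |t|) : ℝ)) : ℂ) * phase t x -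
    Complex.I * ((x : ℂ) ^ 2 / (4 * ((|t| : ℝ) : ℂ) ^ 2) - 1 / ((|t| : ℝ) : ℂ) ^ 2) * Spc t x

lemma key3' {s : ℝ} (hs : 0 < s) : s ^ (-(3 : ℝ) / 2) = s ^ (-(1 : ℝ) / 2) * s⁻¹ := by
  rw [← Real.rpow_neg_one, ← Real.rpow_add hs]; norm_num

lemma key5' {s : ℝ} (hs : 0 < s) : s ^ (-(5 : ℝ) / 2) = s ^ (-(1 : ℝ) / 2) * (s * s)⁻¹ := by
  rw [mul_inv, ← Real.rpow_neg_one, ← Real.rpow_add hs, ← Real.rpow_add hs]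
  norm_num

lemma key3 {t : ℝ} (ht : t ≠ 0) : |t| ^ (-(3 : ℝ) / 2) = |t| ^ (-(1 : ℝ) / 2) * |t|⁻¹ :=
  key3' (abs_pos.mpr ht)

lemma key5 {t : ℝ} (ht : t ≠ 0) : |t| ^ (-(5 : ℝ) / 2) = |t| ^ (-(1 : ℝ) / 2) * (|t| * |t|)⁻¹ :=
  key5' (abs_pos.mpr ht)

lemma hasDerivAt_ofReal (y : ℝ) : HasDerivAt (fun u : ℝ => (u : ℂ)) 1 y :=
  (hasDerivAt_id y).ofReal_comp

lemma hasDerivAt_phase_x {t : ℝ} (ht : t ≠ 0) (x : ℝ) :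
    HasDerivAt (fun y : ℝ => phase t y) ((-Complex.I * x / (2 * |t|)) * phase t x) x := by
  have hcast : ((|t| : ℝ) : ℂ) ≠ 0 := by exact_mod_cast (abs_pos.mpr ht).ne'
  have h1 : HasDerivAt (fun y : ℝ => (y : ℂ) ^ 2) (2 * (x:ℂ)) x := by
    have hh := (hasDerivAt_ofReal x).mul (hasDerivAt_ofReal x)
    have heq : (fun y : ℝ => (y:ℂ)^2) = fun y : ℝ => (y:ℂ)*(y:ℂ) := by funext y; ring
    rw [heq]
    refine hh.congr_deriv (Eq.symm ?_)
    ring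
  have h2 := (h1.const_mul (-Complex.I)).div_const (4 * ((|t| : ℝ) : ℂ))
  have h := (h2.cexp).mul_const (Complex.exp (Complex.I / ((|t| : ℝ) : ℂ)))
  refine h.congr_deriv (Eq.symm ?_)
  rw [phase]
  push_cast
  field_simp
  ring

lemma hasDerivAt_Spc_x {t : ℝ} (ht : t ≠ 0) (x : ℝ) :
    HasDerivAt (fun y : ℝ => Spc t y) (S1 t x) x := by
  have hQc : HasDerivAt (fun y : ℝ => ((Q (y / |t|) : ℝ) : ℂ)) ((Qd (x / |t|) * |t|⁻¹ : ℝ) : ℂ) x := by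
    apply HasDerivAt.ofReal_comp
    have hdiv : HasDerivAt (fun y : ℝ => y / |t|) (|t|⁻¹) x := by
      simpa using (hasDerivAt_id x).div_const |t|
    exact (hasDerivAt_Q (x / |t|)).comp (h₂ := Q) x hdiv
  have h := ((hQc.const_mul (((|t| ^ (-(1 : ℝ) / 2) : ℝ)) : ℂ)).mul (hasDerivAt_phase_x ht x))
  have heq : (fun y : ℝ => (((|t| ^ (-(1 : ℝ) / 2) : ℝ)) : ℂ) * ((Q (y / |t|) : ℝ) : ℂ) * phase t y)
      = fun y : ℝ => Spc t y := by
    funext y; rw [Spc_eq]; push_cast; ring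
  simp only [Pi.mul_def] at h; rw [heq] at h
  refine h.congr_deriv (Eq.symm ?_)
  rw [S1, Spc_eq, key3 ht]
  push_cast
  ring

lemma hasDerivAt_S1_x {t : ℝ} (ht : t ≠ 0) (x : ℝ) :
    HasDerivAt (fun y : ℝ => S1 t y) (S2 t x) x := by
  have hcast : ((|t| : ℝ) : ℂ) ≠ 0 := by exact_mod_cast (abs_pos.mpr ht).ne'
  have hQc : HasDerivAt (fun y : ℝ => ((Qd (y / |t|) : ℝ) : ℂ)) ((Qdd (x / |t|) * |t|⁻¹ : ℝ) : ℂ) x := by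
    apply HasDerivAt.ofReal_comp
    have hdiv : HasDerivAt (fun y : ℝ => y / |t|) (|t|⁻¹) x := by
      simpa using (hasDerivAt_id x).div_const |t|
    exact (hasDerivAt_Qd (x / |t|)).comp x hdiv
  have h1 := ((hQc.const_mul (((|t| ^ (-(3 : ℝ) / 2) : ℝ)) : ℂ)).mul (hasDerivAt_phase_x ht x))
  have hm : HasDerivAt (fun y : ℝ => -Complex.I * (y:ℂ) / (2 * ((|t| : ℝ):ℂ))) (-Complex.I / (2 * ((|t| : ℝ):ℂ))) x := by
    have h := ((hasDerivAt_ofReal x).const_mul (-Complex.I)).div_const (2 * ((|t| : ℝ) : ℂ))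
    refine h.congr_deriv (Eq.symm ?_)
    ring
  have h2 := hm.mul (hasDerivAt_Spc_x ht x)
  have h := h1.add h2
  have heq : (fun y : ℝ => (((|t| ^ (-(3 : ℝ) / 2) : ℝ)) : ℂ) * ((Qd (y / |t|) : ℝ) : ℂ) * phase t y
      + (-Complex.I * (y:ℂ) / (2 * ((|t| : ℝ):ℂ))) * Spc t y) = fun y => S1 t y := by
    funext y; rw [S1]; push_cast; ring
  simp only [Pi.mul_def, Pi.add_def] at h; rw [heq] at h
  refine h.congr_deriv (Eq.symm ?_)
  rw [S2, key5 ht, key3 ht]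
  push_cast
  ring

lemma deriv_Spc_x {t : ℝ} (ht : t ≠ 0) : deriv (fun y : ℝ => Spc t y) = fun x => S1 t x := by
  funext y; exact (hasDerivAt_Spc_x ht y).deriv

lemma deriv2_Spc_x {t : ℝ} (ht : t ≠ 0) (x : ℝ) :
    deriv (deriv (fun y : ℝ => Spc t y)) x = S2 t x := by
  rw [deriv_Spc_x ht]; exact (hasDerivAt_S1_x ht x).deriv

lemma hasDerivAt_G (x s : ℝ) (hs : 0 < s) :
    HasDerivAt (fun u : ℝ => ((u ^ (-(1:ℝ)/2) * Q (x/u) : ℝ):ℂ) *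
        (Complex.exp (-Complex.I*(x:ℂ)^2/(4*((u:ℝ):ℂ))) * Complex.exp (Complex.I/((u:ℝ):ℂ))))
      ((((-(1/2) * s ^ (-(3:ℝ)/2) * Q (x/s) + s ^ (-(1:ℝ)/2) * (Qd (x/s) * (-x/(s*s))) : ℝ)):ℂ) *
        (Complex.exp (-Complex.I*(x:ℂ)^2/(4*((s:ℝ):ℂ))) * Complex.exp (Complex.I/((s:ℝ):ℂ)))
      + ((s ^ (-(1:ℝ)/2) * Q (x/s) : ℝ):ℂ) *
        (Complex.exp (-Complex.I*(x:ℂ)^2/(4*((s:ℝ):ℂ))) * (Complex.I*(x:ℂ)^2/(4*(s:ℂ)^2)) *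
            Complex.exp (Complex.I/((s:ℝ):ℂ))
         + Complex.exp (-Complex.I*(x:ℂ)^2/(4*((s:ℝ):ℂ))) *
            (Complex.exp (Complex.I/((s:ℝ):ℂ)) * (-Complex.I/(s:ℂ)^2)))) s := by
  have hsC : ((s : ℝ) : ℂ) ≠ 0 := by exact_mod_cast hs.ne'
  have hrpow : HasDerivAt (fun u : ℝ => u ^ (-(1 : ℝ) / 2)) (-(1/2) * s ^ (-(3 : ℝ) / 2)) s := by
    have h := Real.hasDerivAt_rpow_const (x := s) (p := -(1 : ℝ) / 2) (Or.inl hs.ne')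
    convert h using 1
    rw [show (-(1:ℝ)/2 - 1) = -(3:ℝ)/2 by norm_num]
    ring
  have hQu : HasDerivAt (fun u : ℝ => Q (x / u)) (Qd (x / s) * (-x / (s * s))) s := by
    have hdiv : HasDerivAt (fun u : ℝ => x / u) (-x / (s * s)) s := by
      have h := (hasDerivAt_inv hs.ne').const_mul x
      have heq : (fun u : ℝ => x * (u)⁻¹) = fun u => x / u := by
        funext u; rw [← div_eq_mul_inv]
      rw [heq] at h
      refine h.congr_deriv (Eq.symm ?_)
      rw [pow_two]
      ring
    exact (hasDerivAt_Q (x / s)).comp s hdiv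
  have hA : HasDerivAt (fun u : ℝ => ((u ^ (-(1 : ℝ) / 2) * Q (x / u) : ℝ) : ℂ))
      (((-(1/2) * s ^ (-(3 : ℝ) / 2) * Q (x / s) + s ^ (-(1 : ℝ) / 2) * (Qd (x / s) * (-x / (s * s))) : ℝ)) : ℂ) s :=
    HasDerivAt.ofReal_comp (hrpow.mul hQu)
  have hinv : HasDerivAt (fun u : ℝ => (((u : ℝ) : ℂ))⁻¹) (-1 / ((s:ℂ)) ^ 2) s := by
    have h := (hasDerivAt_inv (x := ((s:ℝ):ℂ)) hsC).comp_ofReal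
    convert h using 1
    ring
  have hexp1 : HasDerivAt (fun u : ℝ => Complex.exp (-Complex.I * (x : ℂ) ^ 2 / (4 * ((u : ℝ) : ℂ))))
      (Complex.exp (-Complex.I * (x : ℂ) ^ 2 / (4 * ((s : ℝ) : ℂ))) * (Complex.I * (x:ℂ)^2 / (4 * (s:ℂ)^2))) s := by
    have hin : HasDerivAt (fun u : ℝ => -Complex.I * (x : ℂ) ^ 2 / (4 * ((u : ℝ) : ℂ)))
        (Complex.I * (x:ℂ)^2 / (4 * (s:ℂ)^2)) s := by
      have h := hinv.const_mul (-Complex.I * (x : ℂ) ^ 2 / 4)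
      have heq : (fun u : ℝ => -Complex.I * (x : ℂ) ^ 2 / 4 * (((u:ℝ):ℂ))⁻¹)
          = fun u : ℝ => -Complex.I * (x : ℂ) ^ 2 / (4 * ((u : ℝ) : ℂ)) := by
        funext u; ring
      rw [heq] at h
      refine h.congr_deriv (Eq.symm ?_)
      field_simp
      try ring
    exact hin.cexp
  have hexp2 : HasDerivAt (fun u : ℝ => Complex.exp (Complex.I / ((u : ℝ) : ℂ)))
      (Complex.exp (Complex.I / ((s : ℝ) : ℂ)) * (-Complex.I / (s:ℂ)^2)) s := by
    have hin : HasDerivAt (fun u : ℝ => Complex.I / ((u : ℝ) : ℂ)) (-Complex.I / (s:ℂ)^2) s := by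
      have h := hinv.const_mul Complex.I
      have heq : (fun u : ℝ => Complex.I * (((u:ℝ):ℂ))⁻¹) = fun u : ℝ => Complex.I / ((u : ℝ) : ℂ) := by
        funext u; rw [← div_eq_mul_inv]
      rw [heq] at h
      refine h.congr_deriv (Eq.symm ?_)
      field_simp
    exact hin.cexp
  exact hA.mul (hexp1.mul hexp2)

lemma hasDerivAt_Spc_t {t : ℝ} (ht : t < 0) (x : ℝ) :
    HasDerivAt (fun τ : ℝ => Spc τ x) (St t x) t := by
  have hs : (0:ℝ) < -t := by linarith
  have habs : |t| = -t := abs_of_neg ht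
  have hneg : HasDerivAt (fun τ : ℝ => -τ) (-1 : ℝ) t := by
    exact (hasDerivAt_id t).neg
  have hG := (hasDerivAt_G x (-t) hs)
  have h := HasDerivAt.scomp t hG hneg
  have hev : (fun τ : ℝ => ((fun u : ℝ => ((u ^ (-(1:ℝ)/2) * Q (x/u) : ℝ):ℂ) *
        (Complex.exp (-Complex.I*(x:ℂ)^2/(4*((u:ℝ):ℂ))) * Complex.exp (Complex.I/((u:ℝ):ℂ)))) ∘ (fun τ : ℝ => -τ)) τ)
      =ᶠ[nhds t] fun τ : ℝ => Spc τ x := by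
    filter_upwards [Iio_mem_nhds ht] with τ hτ
    simp only [Function.comp]
    rw [Spc_eq, phase, abs_of_neg hτ]
  have h2 := h.congr_of_eventuallyEq hev.symm
  refine h2.congr_deriv (Eq.symm ?_)
  simp only [neg_smul, one_smul]
  rw [St, Spc_eq, phase, habs, key3' hs, key5' hs]
  push_cast
  have hsC : ((-t : ℝ) : ℂ) ≠ 0 := by
    exact_mod_cast hs.ne'
  field_simp
  ring

lemma key4' {s : ℝ} (hs : 0 < s) : (s ^ (-(1:ℝ)/2)) ^ (4:ℕ) = (s * s)⁻¹ := by
  rw [← Real.rpow_natCast (s ^ (-(1:ℝ)/2)) 4, ← Real.rpow_mul hs.le,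
    show (-(1:ℝ)/2 * ((4:ℕ):ℝ) : ℝ) = -2 by push_cast; norm_num]
  rw [show (-2 : ℝ) = (-1) + (-1) by norm_num, Real.rpow_add hs, Real.rpow_neg_one, mul_inv]

set_option maxHeartbeats 1000000 in
lemma NLS {t : ℝ} (ht : t < 0) (x : ℝ) :
    Complex.I * deriv (fun τ : ℝ => Spc τ x) t +
      deriv (deriv (fun y : ℝ => Spc t y)) x +
      ((‖Spc t x‖ : ℝ) : ℂ) ^ 4 * Spc t x = 0 := by
  have hs : (0:ℝ) < |t| := abs_pos.mpr ht.ne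
  have hsC : ((|t| : ℝ) : ℂ) ≠ 0 := by exact_mod_cast hs.ne'
  rw [(hasDerivAt_Spc_t ht x).deriv, deriv2_Spc_x ht.ne x, norm_Spc t x ht.ne]
  have hODE : Qdd (x / |t|) = Q (x / |t|) - Q (x / |t|) ^ 5 := by
    have := Q_ODE (x / |t|); linarith
  have hnorm4 : ((|t| ^ (-(1:ℝ)/2) * Q (x/|t|) : ℝ) : ℂ)^4 = (((|t| * |t|)⁻¹ * Q (x/|t|)^4 : ℝ) : ℂ) := by
    rw [← Complex.ofReal_pow]; congr 1; rw [mul_pow, key4' hs]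
  rw [St, S2, S1, Spc_eq, hODE, key3 ht.ne, key5 ht.ne, hnorm4]
  push_cast
  field_simp
  ring_nf
  simp only [Complex.I_sq]
  ring_nf

-- ### norm of phase and S1
lemma norm_phase {t : ℝ} (ht : t ≠ 0) (x : ℝ) : ‖phase t x‖ = 1 := by
  have hs : (0:ℝ) < |t| := abs_pos.mpr ht
  have hsC : ((|t| : ℝ) : ℂ) ≠ 0 := by exact_mod_cast hs.ne'
  have h1 : -Complex.I * (x : ℂ) ^ 2 / (4 * ((|t| : ℝ) : ℂ)) = ((-(x^2/(4*|t|)) : ℝ) : ℂ) * Complex.I := by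
    push_cast; field_simp
  have h2 : Complex.I / ((|t| : ℝ) : ℂ) = (((1/|t|) : ℝ) : ℂ) * Complex.I := by
    push_cast; field_simp
  rw [phase, h1, h2, norm_mul,
    Complex.norm_exp_ofReal_mul_I, Complex.norm_exp_ofReal_mul_I]
  norm_num

lemma norm_S1_sq {t : ℝ} (ht : t ≠ 0) (x : ℝ) :
    ‖S1 t x‖ ^ 2 = (|t| ^ (-(3 : ℝ) / 2) * Qd (x / |t|)) ^ 2 +
      (x / (2 * |t|) * (|t| ^ (-(1 : ℝ) / 2) * Q (x / |t|))) ^ 2 := by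
  have hs : (0:ℝ) < |t| := abs_pos.mpr ht
  have hsC : ((|t| : ℝ) : ℂ) ≠ 0 := by exact_mod_cast hs.ne'
  have hz : S1 t x = ((((|t| ^ (-(3 : ℝ) / 2) * Qd (x / |t|) : ℝ)) : ℂ) +
      (((-(x / (2 * |t|) * (|t| ^ (-(1 : ℝ) / 2) * Q (x / |t|))) : ℝ)) : ℂ) * Complex.I) * phase t x := by
    rw [S1, Spc_eq]
    push_cast
    field_simp
  rw [hz, norm_mul, norm_phase ht, mul_one, Complex.sq_norm,
    Complex.normSq_add_mul_I]
  ring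

-- ### integrability lemmas

lemma continuous_Q : Continuous Q := by
  have heq : Q = fun x => (3 : ℝ) ^ ((1 : ℝ) / 4) * Real.cosh (2 * x) ^ (-(1 : ℝ) / 2) :=
    funext Q_eq
  rw [heq, continuous_iff_continuousAt]
  intro x
  apply ContinuousAt.mul continuousAt_const
  exact ContinuousAt.rpow_const
    ((Real.continuous_cosh.comp (continuous_const.mul continuous_id)).continuousAt)
    (Or.inl (Real.cosh_pos _).ne')

lemma sq_le_cosh (y : ℝ) : y ^ 2 ≤ 8 * Real.cosh y := by
  have h1 := Real.add_one_le_exp (|y| / 2)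
  have h2 : Real.exp (|y| / 2) * Real.exp (|y| / 2) = Real.exp |y| := by
    rw [← Real.exp_add]; ring_nf
  have h3 : Real.cosh |y| + Real.sinh |y| = Real.exp |y| := Real.cosh_add_sinh |y|
  have h4 : Real.sinh |y| ≤ Real.cosh |y| := by
    nlinarith [Real.cosh_sub_sinh |y|, Real.exp_pos (-|y|)]
  have h5 : Real.cosh |y| = Real.cosh y := Real.cosh_abs y
  have h6 : (0:ℝ) ≤ |y| := abs_nonneg y
  have h7 : (|y| / 2 + 1) ^ 2 ≤ Real.exp |y| := by
    nlinarith [Real.exp_pos (|y| / 2)]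
  nlinarith [sq_abs y]

lemma cosh_sq_le (y : ℝ) : Real.cosh y ^ 2 ≤ Real.cosh (2 * y) := by
  rw [Real.cosh_two_mul]; nlinarith [Real.one_le_cosh y]

lemma cosh_le_cosh2 (y : ℝ) : Real.cosh y ≤ Real.cosh (2 * y) := by
  nlinarith [Real.one_le_cosh y, cosh_sq_le y]

lemma Qd_sq_eq (y : ℝ) :
    Qd y ^ 2 = Real.sqrt 3 * Real.sinh (2 * y) ^ 2 * (Real.cosh (2 * y) ^ 3)⁻¹ := by
  have hc : (0:ℝ) < Real.cosh (2 * y) := Real.cosh_pos _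
  have hstep : Qd y ^ 2 = ((3:ℝ) ^ ((1:ℝ)/4))^2 * Real.sinh (2*y)^2 * (Real.cosh (2*y) ^ (-(3:ℝ)/2))^2 := by
    rw [Qd]; ring
  have h1 : ((3:ℝ) ^ ((1:ℝ)/4))^2 = Real.sqrt 3 := by
    rw [← Real.rpow_natCast ((3:ℝ) ^ ((1:ℝ)/4)) 2, ← Real.rpow_mul (by norm_num : (0:ℝ) ≤ 3),
      Real.sqrt_eq_rpow]
    norm_num
  have h2 : (Real.cosh (2*y) ^ (-(3:ℝ)/2))^2 = (Real.cosh (2*y) ^ 3)⁻¹ := by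
    rw [← Real.rpow_natCast (Real.cosh (2*y) ^ (-(3:ℝ)/2)) 2, ← Real.rpow_mul hc.le,
      show (-(3:ℝ)/2 * ((2:ℕ):ℝ) : ℝ) = -((3:ℕ):ℝ) by push_cast; norm_num,
      Real.rpow_neg hc.le, Real.rpow_natCast]
  rw [hstep, h1, h2]

lemma Qd_sq_le (y : ℝ) : Qd y ^ 2 ≤ Real.sqrt 3 * (Real.cosh y)⁻¹ := by
  have hc : (0:ℝ) < Real.cosh (2 * y) := Real.cosh_pos _
  have hcy : (0:ℝ) < Real.cosh y := Real.cosh_pos _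
  have h3 : (0:ℝ) ≤ Real.sqrt 3 := Real.sqrt_nonneg 3
  rw [Qd_sq_eq]
  have hsinh : Real.sinh (2*y) ^ 2 ≤ Real.cosh (2*y) ^ 2 := by
    nlinarith [Real.cosh_sq_sub_sinh_sq (2*y)]
  have hkey : Real.sinh (2*y) ^ 2 * (Real.cosh (2*y) ^ 3)⁻¹ ≤ (Real.cosh y)⁻¹ := by
    rw [← div_eq_mul_inv]
    rw [div_le_iff₀ (by positivity)]
    have h2 : Real.cosh y * Real.sinh (2*y)^2 ≤ Real.cosh (2*y) * Real.cosh (2*y)^2 := by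
      nlinarith [cosh_le_cosh2 y, Real.one_le_cosh (2*y)]
    calc Real.sinh (2*y) ^ 2 = (Real.cosh y)⁻¹ * (Real.cosh y * Real.sinh (2*y)^2) := by
          field_simp
      _ ≤ (Real.cosh y)⁻¹ * (Real.cosh (2*y) * Real.cosh (2*y)^2) := by
          apply mul_le_mul_of_nonneg_left h2 (by positivity)
      _ = (Real.cosh y)⁻¹ * Real.cosh (2*y)^3 := by ring
  calc Real.sqrt 3 * Real.sinh (2 * y) ^ 2 * (Real.cosh (2 * y) ^ 3)⁻¹
      = Real.sqrt 3 * (Real.sinh (2 * y) ^ 2 * (Real.cosh (2 * y) ^ 3)⁻¹) := by ring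
    _ ≤ Real.sqrt 3 * (Real.cosh y)⁻¹ := mul_le_mul_of_nonneg_left hkey h3

lemma continuous_Qd : Continuous Qd := by
  have : Differentiable ℝ Qd := fun y => (hasDerivAt_Qd y).differentiableAt
  exact this.continuous

lemma integrable_Qd_sq : Integrable (fun y : ℝ => Qd y ^ 2) := by
  apply Integrable.mono' ((integrable_sech.const_mul (Real.sqrt 3)))
  · exact ((continuous_Qd.pow 2).aestronglyMeasurable)
  · filter_upwards with y
    rw [Real.norm_eq_abs, abs_of_nonneg (sq_nonneg _)]
    exact Qd_sq_le y

lemma yQ_sq_le (y : ℝ) : y ^ 2 * Q y ^ 2 / 4 ≤ 2 * Real.sqrt 3 * (Real.cosh y)⁻¹ := by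
  have hcy : (0:ℝ) < Real.cosh y := Real.cosh_pos _
  have hc2 : (0:ℝ) < Real.cosh (2*y) := Real.cosh_pos _
  rw [Q_sq]
  have hkey : y ^ 2 * (Real.cosh (2*y))⁻¹ ≤ 8 * (Real.cosh y)⁻¹ := by
    rw [← div_eq_mul_inv, div_le_iff₀ hc2]
    have := sq_le_cosh y
    have h8 : y^2 * Real.cosh y ≤ 8 * Real.cosh (2*y) := by
      nlinarith [cosh_sq_le y, Real.one_le_cosh y, sq_nonneg y]
    calc y ^ 2 = (Real.cosh y)⁻¹ * (y^2 * Real.cosh y) := by field_simp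
      _ ≤ (Real.cosh y)⁻¹ * (8 * Real.cosh (2*y)) := by
          apply mul_le_mul_of_nonneg_left h8 (by positivity)
      _ = 8 * (Real.cosh y)⁻¹ * Real.cosh (2*y) := by ring
  have h3 : (0:ℝ) ≤ Real.sqrt 3 := Real.sqrt_nonneg 3
  calc y ^ 2 * (Real.sqrt 3 * (Real.cosh (2 * y))⁻¹) / 4
      = Real.sqrt 3 / 4 * (y^2 * (Real.cosh (2*y))⁻¹) := by ring
    _ ≤ Real.sqrt 3 / 4 * (8 * (Real.cosh y)⁻¹) := by
        apply mul_le_mul_of_nonneg_left hkey (by positivity)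
    _ = 2 * Real.sqrt 3 * (Real.cosh y)⁻¹ := by ring

lemma integrable_yQ_sq : Integrable (fun y : ℝ => y ^ 2 * Q y ^ 2 / 4) := by
  apply Integrable.mono' ((integrable_sech.const_mul (2 * Real.sqrt 3)))
  · apply Continuous.aestronglyMeasurable
    exact ((continuous_id.pow 2).mul (continuous_Q.pow 2)).div_const 4
  · filter_upwards with y
    rw [Real.norm_eq_abs, abs_of_nonneg (by positivity)]
    exact yQ_sq_le y

lemma integral_Qd_sq_pos : 0 < ∫ y : ℝ, Qd y ^ 2 := by
  rw [integral_pos_iff_support_of_nonneg (fun y => sq_nonneg _) integrable_Qd_sq]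
  have hsub : Set.Ioi (0:ℝ) ⊆ Function.support (fun y : ℝ => Qd y ^ 2) := by
    intro y hy
    simp only [Function.mem_support]
    apply pow_ne_zero
    rw [Qd]
    apply mul_ne_zero (mul_ne_zero _ _) _
    · simp only [ne_eq, neg_eq_zero]
      positivity
    · exact (Real.sinh_pos_iff.mpr (by simpa using hy : (0:ℝ) < 2 * y)).ne'
    · exact (Real.rpow_pos_of_pos (Real.cosh_pos _) _).ne'
  calc (0:ENNReal) < volume (Set.Ioi (0:ℝ)) := by simp [Real.volume_Ioi]
    _ ≤ volume (Function.support (fun y : ℝ => Qd y ^ 2)) := measure_mono hsub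

lemma key32 {s : ℝ} (hs : 0 < s) : (s ^ (-(3:ℝ)/2))^2 = s⁻¹ * (s * s)⁻¹ := by
  rw [← Real.rpow_natCast (s ^ (-(3:ℝ)/2)) 2, ← Real.rpow_mul hs.le,
    show (-(3:ℝ)/2 * ((2:ℕ):ℝ) : ℝ) = (-1) + ((-1) + (-1)) by push_cast; norm_num,
    Real.rpow_add hs, Real.rpow_add hs, Real.rpow_neg_one, mul_inv]

lemma key12 {s : ℝ} (hs : 0 < s) : (s ^ (-(1:ℝ)/2))^2 = s⁻¹ := by
  rw [← Real.rpow_natCast (s ^ (-(1:ℝ)/2)) 2, ← Real.rpow_mul hs.le,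
    show (-(1:ℝ)/2 * ((2:ℕ):ℝ) : ℝ) = -1 by push_cast; norm_num, Real.rpow_neg_one]

lemma kinetic {t : ℝ} (ht : t < 0) :
    ∫ x : ℝ, ‖S1 t x‖ ^ 2 = (∫ y : ℝ, Qd y ^ 2) / (|t| * |t|) + ∫ y : ℝ, y ^ 2 * Q y ^ 2 / 4 := by
  have hs : (0:ℝ) < |t| := abs_pos.mpr ht.ne
  have hpt : ∀ x : ℝ, ‖S1 t x‖ ^ 2 =
      |t|⁻¹ * ((|t| * |t|)⁻¹ * Qd (x / |t|) ^ 2 + (x / |t|) ^ 2 * Q (x / |t|) ^ 2 / 4) := by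
    intro x
    rw [norm_S1_sq ht.ne x, mul_pow, key32 hs, mul_pow, mul_pow, key12 hs]
    ring
  simp only [hpt]
  rw [MeasureTheory.integral_const_mul,
    MeasureTheory.Measure.integral_comp_div
      (fun y : ℝ => (|t| * |t|)⁻¹ * Qd y ^ 2 + y ^ 2 * Q y ^ 2 / 4) |t|,
    abs_of_pos hs, smul_eq_mul, ← mul_assoc, inv_mul_cancel₀ hs.ne', one_mul,
    integral_add (integrable_Qd_sq.const_mul _) integrable_yQ_sq,
    MeasureTheory.integral_const_mul, div_eq_mul_inv, mul_comm]

lemma blowup_bounds :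
    ∃ c C : ℝ, 0 < c ∧ 0 < C ∧ ∀ t ∈ Set.Ico (-1 : ℝ) 0,
      c / |t| ≤ Real.sqrt (∫ x : ℝ, ‖S1 t x‖ ^ 2) ∧
      Real.sqrt (∫ x : ℝ, ‖S1 t x‖ ^ 2) ≤ C / |t| := by
  set KA := ∫ y : ℝ, Qd y ^ 2 with hKA
  set KB := ∫ y : ℝ, y ^ 2 * Q y ^ 2 / 4 with hKB
  have hKApos : 0 < KA := integral_Qd_sq_pos
  have hKBpos : 0 ≤ KB := integral_nonneg fun y => by positivity
  refine ⟨Real.sqrt KA, Real.sqrt (KA + KB), Real.sqrt_pos.mpr hKApos,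
    Real.sqrt_pos.mpr (by linarith), ?_⟩
  rintro t ⟨ht1, ht2⟩
  have hs : (0:ℝ) < |t| := abs_pos.mpr ht2.ne
  have hs1 : |t| ≤ 1 := by rw [abs_of_neg ht2]; linarith
  rw [kinetic ht2, ← hKA, ← hKB]
  constructor
  · have h1 : Real.sqrt KA / |t| = Real.sqrt (KA / (|t| * |t|)) := by
      rw [Real.sqrt_div hKApos.le, Real.sqrt_mul_self hs.le]
    rw [h1]
    apply Real.sqrt_le_sqrt
    have : 0 ≤ KB := hKBpos
    linarith
  · have h1 : Real.sqrt (KA + KB) / |t| = Real.sqrt ((KA + KB) / (|t| * |t|)) := by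
      rw [Real.sqrt_div (by linarith), Real.sqrt_mul_self hs.le]
    rw [h1]
    apply Real.sqrt_le_sqrt
    have hss : |t| * |t| ≤ 1 := by nlinarith
    have h2 : KB ≤ KB / (|t| * |t|) := by
      rw [le_div_iff₀ (by positivity)]
      nlinarith
    have h3 : KA / (|t| * |t|) + KB ≤ KA / (|t| * |t|) + KB / (|t| * |t|) := by linarith
    calc KA / (|t| * |t|) + KB ≤ KA / (|t| * |t|) + KB / (|t| * |t|) := h3
      _ = (KA + KB) / (|t| * |t|) := by ring

lemma contDiff_Q : ContDiff ℝ (⊤ : ℕ∞) Q := by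
  have heq : Q = fun x => (3 : ℝ) ^ ((1 : ℝ) / 4) * Real.cosh (2 * x) ^ (-(1 : ℝ) / 2) :=
    funext Q_eq
  rw [heq, contDiff_iff_contDiffAt]
  intro x
  apply ContDiffAt.mul contDiffAt_const
  apply ContDiffAt.rpow_const_of_ne
  · exact (Real.contDiff_cosh.comp (contDiff_const.mul contDiff_id)).contDiffAt
  · exact (Real.cosh_pos _).ne'

lemma smooth_Spc :
    ContDiffOn ℝ (⊤ : ℕ∞) (fun p : ℝ × ℝ => Spc p.1 p.2) (Set.Iio (0 : ℝ) ×ˢ Set.univ) := by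
  have hofReal : ContDiff ℝ (⊤ : ℕ∞) (fun r : ℝ => (r : ℂ)) := Complex.ofRealCLM.contDiff
  have hF : ContDiffOn ℝ (⊤ : ℕ∞) (fun p : ℝ × ℝ =>
      (((-p.1) ^ (-(1 : ℝ) / 2) * Q (p.2 / (-p.1)) : ℝ) : ℂ) *
        Complex.exp (-Complex.I * (p.2 : ℂ) ^ 2 / (4 * (((-p.1 : ℝ)) : ℂ))) *
        Complex.exp (Complex.I / (((-p.1 : ℝ)) : ℂ))) (Set.Iio (0 : ℝ) ×ˢ Set.univ) := by
    intro p hp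
    have hp1 : p.1 < 0 := (Set.mem_prod.mp hp).1
    have hne : -p.1 ≠ 0 := by simp; exact hp1.ne
    have hneC : (((-p.1 : ℝ)) : ℂ) ≠ 0 := by exact_mod_cast (show (-p.1 : ℝ) ≠ 0 from hne)
    apply ContDiffAt.contDiffWithinAt
    have hneg : ContDiffAt ℝ (⊤ : ℕ∞) (fun q : ℝ × ℝ => -q.1) p := (contDiff_fst.neg).contDiffAt
    have hrpow : ContDiffAt ℝ (⊤ : ℕ∞) (fun q : ℝ × ℝ => (-q.1) ^ (-(1 : ℝ) / 2)) p :=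
      (Real.contDiffAt_rpow_const_of_ne (p := -(1 : ℝ) / 2) hne).comp (g := fun u : ℝ => u ^ (-(1 : ℝ) / 2)) p hneg
    have hdiv : ContDiffAt ℝ (⊤ : ℕ∞) (fun q : ℝ × ℝ => q.2 / (-q.1)) p :=
      contDiff_snd.contDiffAt.div hneg hne
    have hQc : ContDiffAt ℝ (⊤ : ℕ∞) (fun q : ℝ × ℝ => Q (q.2 / (-q.1))) p :=
      contDiff_Q.contDiffAt.comp p hdiv
    have hcast : ContDiffAt ℝ (⊤ : ℕ∞) (fun q : ℝ × ℝ => (((-q.1) ^ (-(1 : ℝ) / 2) * Q (q.2 / (-q.1)) : ℝ) : ℂ)) p :=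
      hofReal.contDiffAt.comp p (hrpow.mul hQc)
    have hcast1 : ContDiffAt ℝ (⊤ : ℕ∞) (fun q : ℝ × ℝ => (((-q.1 : ℝ)) : ℂ)) p :=
      hofReal.contDiffAt.comp p hneg
    have hsnd : ContDiffAt ℝ (⊤ : ℕ∞) (fun q : ℝ × ℝ => ((q.2 : ℝ) : ℂ)) p :=
      hofReal.contDiffAt.comp p contDiff_snd.contDiffAt
    have hexpC : ContDiff ℝ (⊤ : ℕ∞) Complex.exp := Complex.contDiff_exp
    have hfrac1 : ContDiffAt ℝ (⊤ : ℕ∞) (fun q : ℝ × ℝ => -Complex.I * (q.2 : ℂ) ^ 2 / (4 * (((-q.1 : ℝ)) : ℂ))) p := by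
      simp only [div_eq_mul_inv]
      apply (contDiffAt_const.mul (hsnd.pow 2)).mul
      apply ContDiffAt.inv (contDiffAt_const.mul hcast1)
      simp only [ne_eq, mul_eq_zero]
      push_neg
      exact ⟨by norm_num, hneC⟩
    have hexp1 : ContDiffAt ℝ (⊤ : ℕ∞) (fun q : ℝ × ℝ =>
        Complex.exp (-Complex.I * (q.2 : ℂ) ^ 2 / (4 * (((-q.1 : ℝ)) : ℂ)))) p :=
      hexpC.contDiffAt.comp p hfrac1
    have hfrac2 : ContDiffAt ℝ (⊤ : ℕ∞) (fun q : ℝ × ℝ => Complex.I / (((-q.1 : ℝ)) : ℂ)) p := by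
      simp only [div_eq_mul_inv]
      exact contDiffAt_const.mul (hcast1.inv hneC)
    have hexp2 : ContDiffAt ℝ (⊤ : ℕ∞) (fun q : ℝ × ℝ => Complex.exp (Complex.I / (((-q.1 : ℝ)) : ℂ))) p :=
      hexpC.contDiffAt.comp p hfrac2
    exact (hcast.mul hexp1).mul hexp2
  apply hF.congr
  intro p hp
  have hp1 : p.1 < 0 := (Set.mem_prod.mp hp).1
  rw [Spc, abs_of_neg hp1]


/-- `S` is smooth on `(−∞,0) × ℝ`, solves the quintic NLS
`i∂ₜS + ∂ₓ²S + |S|⁴S = 0` there, has critical mass `∫|S(t)|² = √3·π/2`,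
and blows up at time `0` with speed `‖∂ₓS(t)‖_{L²} ≈ 1/|t|`. -/
theorem pseudoconformal_blowup_solution :
    ContDiffOn ℝ (⊤ : ℕ∞) (fun p : ℝ × ℝ => Spc p.1 p.2) (Set.Iio (0 : ℝ) ×ˢ Set.univ) ∧
    (∀ t : ℝ, t < 0 → ∀ x : ℝ,
      Complex.I * deriv (fun τ : ℝ => Spc τ x) t +
        deriv (deriv (fun y : ℝ => Spc t y)) x +
        (‖Spc t x‖ : ℂ) ^ 4 * Spc t x = 0) ∧
    (∀ t : ℝ, t < 0 → (∫ x : ℝ, ‖Spc t x‖ ^ 2) = Real.sqrt 3 * Real.pi / 2) ∧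
    ∃ c C : ℝ, 0 < c ∧ 0 < C ∧ ∀ t ∈ Set.Ico (-1 : ℝ) 0,
      c / |t| ≤ Real.sqrt (∫ x : ℝ, ‖deriv (fun y : ℝ => Spc t y) x‖ ^ 2) ∧
      Real.sqrt (∫ x : ℝ, ‖deriv (fun y : ℝ => Spc t y) x‖ ^ 2) ≤ C / |t| := by
  refine ⟨smooth_Spc, ?_, ?_, ?_⟩
  · intro t ht x
    exact NLS ht x
  · intro t ht
    exact mass t ht
  · obtain ⟨c, C, hc, hC, hb⟩ := blowup_bounds
    refine ⟨c, C, hc, hC, ?_⟩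
    rintro t ⟨ht1, ht2⟩
    rw [deriv_Spc_x ht2.ne]
    exact hb t ⟨ht1, ht2⟩
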